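/- Fix d ∈ ℕ, reals ε' > 0 and ε_1, …, ε_d > 0, an index i ∈ {1, …, d}, an integer o ≥ 0, and integers a_1, …, a_d and b_1, …, b_d with |a_j − b_j| ≤ 1 for every j, and additionally assume either a_j ≤ b_j for all j ∈ {1, …, d} or a_j ≥ b_j for all j ∈ {1, …, d} (monotonicity). Define A = ∑_{k=0}^∞ Geo(e^{−ε'})(k) · Geo(e^{−ε_i})(o + k − a_i) · ∏_{j=1}^{i−1} Geo(e^{−ε_j})(< k − a_j) and A' the same expression with each a_j replaced by b_j. Then A ≤ e^{ε_i + ε'} · A'. -/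
import Mathlib


open Real Finset

/-- The geometric distribution with failure probability `p`: mass `(1-p)·p^k` at each
integer `k ≥ 0`, and `0` at negative integers. -/
noncomputable def Geo (p : ℝ) (k : ℤ) : ℝ := if 0 ≤ k then (1 - p) * p ^ k.toNat else 0

/-- `Geo(p)(< x) = ∑_{y=0}^{x-1} Geo(p)(y)` (which is `0` when `x ≤ 0`). -/
noncomputable def GeoLT (p : ℝ) (x : ℤ) : ℝ := ∑ y ∈ Finset.range x.toNat, Geo p (y : ℤ)

lemma Geo_nonneg {p : ℝ} (hp0 : 0 ≤ p) (hp1 : p ≤ 1) (k : ℤ) : 0 ≤ Geo p k := by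
  unfold Geo; split
  · exact mul_nonneg (by linarith) (pow_nonneg hp0 _)
  · exact le_refl 0

lemma Geo_le_one {p : ℝ} (hp0 : 0 ≤ p) (hp1 : p ≤ 1) (k : ℤ) : Geo p k ≤ 1 := by
  unfold Geo; split
  · nlinarith [pow_le_one₀ hp0 hp1 (n := k.toNat), pow_nonneg hp0 k.toNat]
  · norm_num

lemma GeoLT_nonneg {p : ℝ} (hp0 : 0 ≤ p) (hp1 : p ≤ 1) (x : ℤ) : 0 ≤ GeoLT p x :=
  Finset.sum_nonneg fun y _ => Geo_nonneg hp0 hp1 _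

lemma GeoLT_le_one {p : ℝ} (hp0 : 0 ≤ p) (hp1 : p < 1) (x : ℤ) : GeoLT p x ≤ 1 := by
  unfold GeoLT
  have h1 : ∀ y ∈ Finset.range x.toNat, Geo p (y : ℤ) = (1-p) * p ^ y := by
    intro y _; unfold Geo; simp
  rw [Finset.sum_congr rfl h1, ← Finset.mul_sum, geom_sum_eq (ne_of_lt hp1)]
  have hne : p - 1 ≠ 0 := by linarith
  have h2 : (1-p) * ((p ^ x.toNat - 1)/(p-1)) = 1 - p ^ x.toNat := by
    rw [mul_comm, div_mul_eq_mul_div, div_eq_iff hne]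
    ring
  rw [h2]
  nlinarith [pow_nonneg hp0 x.toNat]

lemma GeoLT_mono {p : ℝ} (hp0 : 0 ≤ p) (hp1 : p ≤ 1) {x x' : ℤ} (h : x ≤ x') :
    GeoLT p x ≤ GeoLT p x' :=
  Finset.sum_le_sum_of_subset_of_nonneg
    (Finset.range_subset_range.2 (Int.toNat_le_toNat h))
    (fun y _ _ => Geo_nonneg hp0 hp1 _)

lemma exp_neg_lt_one {ε : ℝ} (hε : 0 < ε) : Real.exp (-ε) < 1 := by
  rw [show (1:ℝ) = Real.exp 0 from (Real.exp_zero).symm]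
  exact Real.exp_lt_exp.2 (by linarith)

lemma Geo_step {ε : ℝ} (hε : 0 < ε) (m : ℤ) :
    Geo (Real.exp (-ε)) m ≤ Real.exp ε * Geo (Real.exp (-ε)) (m + 1) := by
  set p := Real.exp (-ε) with hp
  have hp0 : 0 < p := Real.exp_pos _
  have hp1 : p < 1 := exp_neg_lt_one hε
  by_cases hm : 0 ≤ m
  · have h1 : (0:ℤ) ≤ m + 1 := by linarith
    have h2 : (m+1).toNat = m.toNat + 1 := by omega
    unfold Geo
    rw [if_pos hm, if_pos h1, h2, pow_succ]
    have hep : Real.exp ε * p = 1 := by rw [hp, ← Real.exp_add]; simp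
    have : Real.exp ε * ((1-p) * (p ^ m.toNat * p)) = (Real.exp ε * p) * ((1-p) * p ^ m.toNat) := by ring
    rw [this, hep, one_mul]
  · have h0 : Geo p m = 0 := by unfold Geo; rw [if_neg hm]
    rw [h0]
    exact mul_nonneg (Real.exp_pos _).le (Geo_nonneg hp0.le hp1.le _)

lemma Geo_step' {ε : ℝ} (hε : 0 < ε) (m t : ℤ) (ht0 : 0 ≤ t) (ht1 : t ≤ 1) :
    Geo (Real.exp (-ε)) m ≤ Real.exp ε * Geo (Real.exp (-ε)) (m + t) := by
  interval_cases t
  · simp only [add_zero]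
    nth_rewrite 1 [show Geo (Real.exp (-ε)) m = 1 * Geo (Real.exp (-ε)) m from (one_mul _).symm]
    exact mul_le_mul_of_nonneg_right (by simpa using Real.one_le_exp hε.le)
      (Geo_nonneg (Real.exp_pos _).le (exp_neg_lt_one hε).le _)
  · exact Geo_step hε m

lemma Geo_summable {ε : ℝ} (hε : 0 < ε) :
    Summable (fun k : ℕ => Geo (Real.exp (-ε)) (k : ℤ)) := by
  have h : (fun k : ℕ => Geo (Real.exp (-ε)) (k:ℤ))
      = fun k => (1 - Real.exp (-ε)) * Real.exp (-ε) ^ k := by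
    funext k; unfold Geo; simp
  rw [h]
  exact (summable_geometric_of_lt_one (Real.exp_pos _).le (exp_neg_lt_one hε)).mul_left _

/-- Ex-post DP guarantee of the AboveThreshold mechanism with monotone queries:
for sensitivity-1 queries that are one-sidedly ordered between the two neighboring datasets,
the probability of outputting `(o, i)` increases by at most a factor `e^(ε_i + ε')`. -/
theorem abovethreshold_expost_monotone
    (d : ℕ) (ε' : ℝ) (hε' : 0 < ε')
    (ε : Fin d → ℝ) (hε : ∀ j, 0 < ε j)
    (i : Fin d) (o : ℤ) (ho : 0 ≤ o)
    (a b : Fin d → ℤ) (hab : ∀ j, |a j - b j| ≤ 1)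
    (hmono : (∀ j, a j ≤ b j) ∨ (∀ j, b j ≤ a j)) :
    (∑' k : ℕ, Geo (Real.exp (-ε')) k *
        Geo (Real.exp (-(ε i))) (o + k - a i) *
        ∏ j ∈ Finset.univ.filter (fun j => j < i), GeoLT (Real.exp (-(ε j))) (k - a j))
    ≤ Real.exp (ε i + ε') *
      ∑' k : ℕ, Geo (Real.exp (-ε')) k *
        Geo (Real.exp (-(ε i))) (o + k - b i) *
        ∏ j ∈ Finset.univ.filter (fun j => j < i), GeoLT (Real.exp (-(ε j))) (k - b j) := by
  classical
  set F : (Fin d → ℤ) → ℕ → ℝ := fun v k =>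
    Geo (Real.exp (-ε')) k * Geo (Real.exp (-(ε i))) (o + k - v i) *
      ∏ j ∈ Finset.univ.filter (fun j => j < i), GeoLT (Real.exp (-(ε j))) (k - v j)
    with hFdef
  show ∑' k, F a k ≤ Real.exp (ε i + ε') * ∑' k, F b k
  set c := Real.exp (ε i + ε') with hc
  have hc0 : 0 ≤ c := (Real.exp_pos _).le
  -- basic positivity facts
  have hGnn : ∀ (η : ℝ), 0 < η → ∀ m : ℤ, 0 ≤ Geo (Real.exp (-η)) m := fun η hη m =>
    Geo_nonneg (Real.exp_pos _).le (exp_neg_lt_one hη).le m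
  have hGle1 : ∀ (η : ℝ), 0 < η → ∀ m : ℤ, Geo (Real.exp (-η)) m ≤ 1 := fun η hη m =>
    Geo_le_one (Real.exp_pos _).le (exp_neg_lt_one hη).le m
  have hFnn : ∀ v k, 0 ≤ F v k := by
    intro v k
    apply mul_nonneg (mul_nonneg (hGnn _ hε' _) (hGnn _ (hε i) _))
    exact Finset.prod_nonneg fun j _ =>
      GeoLT_nonneg (Real.exp_pos _).le (exp_neg_lt_one (hε j)).le _
  have hFle : ∀ v k, F v k ≤ Geo (Real.exp (-ε')) (k : ℤ) := by
    intro v k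
    have hP : (∏ j ∈ Finset.univ.filter (fun j => j < i),
        GeoLT (Real.exp (-(ε j))) (k - v j)) ≤ 1 :=
      Finset.prod_le_one
        (fun j _ => GeoLT_nonneg (Real.exp_pos _).le (exp_neg_lt_one (hε j)).le _)
        (fun j _ => GeoLT_le_one (Real.exp_pos _).le (exp_neg_lt_one (hε j)) _)
    calc F v k ≤ Geo (Real.exp (-ε')) k * Geo (Real.exp (-(ε i))) (o + k - v i) * 1 :=
          mul_le_mul_of_nonneg_left hP (mul_nonneg (hGnn _ hε' _) (hGnn _ (hε i) _))
      _ = Geo (Real.exp (-ε')) k * Geo (Real.exp (-(ε i))) (o + k - v i) := mul_one _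
      _ ≤ Geo (Real.exp (-ε')) (k : ℤ) * 1 :=
          mul_le_mul_of_nonneg_left (hGle1 _ (hε i) _) (hGnn _ hε' _)
      _ = _ := mul_one _
  have hFsum : ∀ v, Summable (F v) := fun v =>
    Summable.of_nonneg_of_le (hFnn v) (hFle v) (Geo_summable hε')
  -- choose the shift s
  obtain ⟨s, hs1, hbas, ht0, ht1⟩ :
      ∃ s : ℕ, s ≤ 1 ∧ (∀ j, b j ≤ a j + s) ∧
        0 ≤ (s : ℤ) + a i - b i ∧ (s : ℤ) + a i - b i ≤ 1 := by
    rcases hmono with h | h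
    · refine ⟨1, le_refl 1, fun j => ?_, ?_, ?_⟩
      · have := abs_le.1 (hab j); omega
      · have := abs_le.1 (hab i); omega
      · have := h i; omega
    · refine ⟨0, Nat.zero_le 1, fun j => by simpa using h j, ?_, ?_⟩
      · have := h i; omega
      · have := abs_le.1 (hab i); omega
  -- key termwise bound
  have key : ∀ k : ℕ, F a k ≤ c * F b (k + s) := by
    intro k
    have hG' : Geo (Real.exp (-ε')) (k : ℤ)
        ≤ Real.exp ε' * Geo (Real.exp (-ε')) ((k + s : ℕ) : ℤ) := by
      have : ((k + s : ℕ) : ℤ) = (k : ℤ) + (s : ℤ) := by push_cast; ring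
      rw [this]
      exact Geo_step' hε' (k : ℤ) (s : ℤ) (by positivity) (by exact_mod_cast hs1)
    have hGi : Geo (Real.exp (-(ε i))) (o + k - a i)
        ≤ Real.exp (ε i) * Geo (Real.exp (-(ε i))) (o + ((k + s : ℕ) : ℤ) - b i) := by
      have harg : o + ((k + s : ℕ) : ℤ) - b i = (o + k - a i) + ((s : ℤ) + a i - b i) := by
        push_cast; ring
      rw [harg]
      exact Geo_step' (hε i) _ _ ht0 ht1
    have hP : (∏ j ∈ Finset.univ.filter (fun j => j < i),
          GeoLT (Real.exp (-(ε j))) (k - a j))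
        ≤ ∏ j ∈ Finset.univ.filter (fun j => j < i),
          GeoLT (Real.exp (-(ε j))) (((k + s : ℕ) : ℤ) - b j) := by
      apply Finset.prod_le_prod
      · exact fun j _ => GeoLT_nonneg (Real.exp_pos _).le (exp_neg_lt_one (hε j)).le _
      · intro j _
        apply GeoLT_mono (Real.exp_pos _).le (exp_neg_lt_one (hε j)).le
        have := hbas j
        push_cast
        omega
    have h1 : F a k ≤ (Real.exp ε' * Geo (Real.exp (-ε')) ((k + s : ℕ) : ℤ))
        * (Real.exp (ε i) * Geo (Real.exp (-(ε i))) (o + ((k + s : ℕ) : ℤ) - b i))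
        * ∏ j ∈ Finset.univ.filter (fun j => j < i),
            GeoLT (Real.exp (-(ε j))) (((k + s : ℕ) : ℤ) - b j) := by
      apply mul_le_mul
      · exact mul_le_mul hG' hGi (hGnn _ (hε i) _)
          (mul_nonneg (Real.exp_pos _).le (hGnn _ hε' _))
      · exact hP
      · exact Finset.prod_nonneg fun j _ =>
          GeoLT_nonneg (Real.exp_pos _).le (exp_neg_lt_one (hε j)).le _
      · exact mul_nonneg (mul_nonneg (Real.exp_pos _).le (hGnn _ hε' _))
          (mul_nonneg (Real.exp_pos _).le (hGnn _ (hε i) _))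
    calc F a k ≤ _ := h1
      _ = c * F b (k + s) := by
          simp only [hFdef, hc, Real.exp_add]
          ring
  -- sum up
  have hsum_shift : Summable (fun k : ℕ => F b (k + s)) :=
    (summable_nat_add_iff s).2 (hFsum b)
  have h2 : ∑' k, F a k ≤ ∑' k, c * F b (k + s) :=
    Summable.tsum_le_tsum key (hFsum a) (hsum_shift.mul_left c)
  have h3 : ∑' k : ℕ, c * F b (k + s) = c * ∑' k : ℕ, F b (k + s) := tsum_mul_left
  have h4 : ∑' k : ℕ, F b (k + s) ≤ ∑' k, F b k := by
    have := Summable.sum_add_tsum_nat_add s (hFsum b)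
    have hnn : 0 ≤ ∑ k ∈ Finset.range s, F b k := Finset.sum_nonneg fun k _ => hFnn b k
    linarith
  calc ∑' k, F a k ≤ ∑' k, c * F b (k + s) := h2
    _ = c * ∑' k : ℕ, F b (k + s) := h3
    _ ≤ c * ∑' k, F b k := mul_le_mul_of_nonneg_left h4 hc0
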